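/- arXiv:1204.5913 — 3 statements merged into one kernel-verified Lean document; each statement's English description precedes it below -/
import Mathlib

section
/- The supremum over real θ₁, θ₂ of |1 + e^{iθ₁} + e^{iθ₂} − e^{i(θ₁+θ₂)}| equals 2√2. -/
/-!
Writing `w = e^{iθ₁}`, `z = e^{iθ₂}`, the expression is `(1 + z) + w (1 - z)`, so its modulus is at
most `|1 + z| + |1 - z|`. By the parallelogram law `|1 + z|² + |1 - z|² = 4`, and then
`(a + b)² ≤ 2 (a² + b²)` bounds the sum by `2√2`. The bound is attained at `θ₁ = θ₂ = π/2`,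
where the expression is `2 + 2i`.
-/

open Complex

theorem norm_add_sq_add_norm_sub_sq_of_norm_eq_one {E : Type*} [NormedAddCommGroup E]
    [InnerProductSpace ℝ E] {x y : E} (hx : ‖x‖ = 1) (hy : ‖y‖ = 1) :
    ‖x + y‖ ^ 2 + ‖x - y‖ ^ 2 = 4 := by
  have h := parallelogram_law_with_norm ℝ x y
  rw [hx, hy] at h
  linear_combination h

theorem norm_one_add_add_sub_mul_le {w z : ℂ} (hw : ‖w‖ = 1) (hz : ‖z‖ = 1) :
    ‖1 + w + z - w * z‖ ≤ 2 * √2 := by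
  have htri : ‖1 + w + z - w * z‖ ≤ ‖1 + z‖ + ‖1 - z‖ :=
    calc ‖1 + w + z - w * z‖ = ‖(1 + z) + w * (1 - z)‖ := by congr 1; ring
      _ ≤ ‖1 + z‖ + ‖w * (1 - z)‖ := norm_add_le _ _
      _ = ‖1 + z‖ + ‖1 - z‖ := by rw [norm_mul, hw, one_mul]
  have hsq : (‖1 + z‖ + ‖1 - z‖) ^ 2 ≤ (2 * √2) ^ 2 :=
    calc (‖1 + z‖ + ‖1 - z‖) ^ 2 ≤ 2 * (‖1 + z‖ ^ 2 + ‖1 - z‖ ^ 2) := add_sq_le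
      _ = (2 * √2) ^ 2 := by
        rw [norm_add_sq_add_norm_sub_sq_of_norm_eq_one norm_one hz, mul_pow,
          Real.sq_sqrt zero_le_two]
        norm_num
  exact htri.trans (le_of_sq_le_sq hsq (by positivity))

theorem norm_one_add_I_add_I_sub_I_mul_I : ‖1 + I + I - I * I‖ = 2 * √2 := by
  rw [show 1 + I + I - I * I = 2 * (1 + I) by rw [I_mul_I]; ring, norm_mul,
    Complex.norm_two, norm_def, normSq_apply]
  norm_num

/-- Tsirelson's bound via the Werner–Wolf formula: the supremum over real
phases `θ₁, θ₂` of `|1 + e^{iθ₁} + e^{iθ₂} − e^{i(θ₁+θ₂)}|` equals `2√2`. -/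
theorem tsirelson_bound_phase_formula :
    sSup {x : ℝ | ∃ θ₁ θ₂ : ℝ,
      x = ‖1 + Complex.exp (Complex.I * θ₁) +
        Complex.exp (Complex.I * θ₂) -
        Complex.exp (Complex.I * (θ₁ + θ₂))‖} = 2 * Real.sqrt 2 := by
  simp only [mul_add, exp_add]
  refine IsGreatest.csSup_eq ⟨⟨Real.pi / 2, Real.pi / 2, ?_⟩, ?_⟩
  · rw [mul_comm I, ofReal_div, ofReal_ofNat, exp_pi_div_two_mul_I,
      norm_one_add_I_add_I_sub_I_mul_I]
  · rintro x ⟨θ₁, θ₂, rfl⟩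
    exact norm_one_add_add_sub_mul_le (norm_exp_I_mul_ofReal θ₁) (norm_exp_I_mul_ofReal θ₂)
end

section
/- For a positive integer n, the inequality cos(π/(2n)) > 1 − 2^(2−n) holds if and only if n ≤ 7. In particular, for all integers n ≥ 8 one has cos(π/(2n)) ≤ 1 − 4/2ⁿ. -/
/-!
Write `y = π / (2n)`. The Taylor bounds `1 - y²/2 ≤ cos y ≤ 1 - (43/96) y²` (the latter for `|y| ≤ 1`)
pin `1 - cos y` between `π² / (8n²)` and `1 / n²` (using `π > 3`). Hence `cos y ≤ 1 - 4 / 2ⁿ` as soon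
as `4n² ≤ 2ⁿ`, i.e. for `n ≥ 8`, while for `n ≤ 7` the bound `π² · 2ⁿ < 32 n²` (using `π < 3.15`)
gives the strict reverse inequality.
-/

open Real

theorem cos_le_one_sub_mul_sq {x : ℝ} (hx : |x| ≤ 1) : cos x ≤ 1 - 43 / 96 * x ^ 2 := by
  -- `43 / 96 = 1 / 2 - 5 / 96`: the quartic remainder of `cos_bound` is absorbed using `x ^ 4 ≤ x ^ 2`.
  have htaylor := (abs_le.1 (cos_bound hx)).2
  have hx_sq : x ^ 2 ≤ 1 := by nlinarith [sq_abs x, abs_nonneg x]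
  have hx4 : |x| ^ 4 = (x ^ 2) ^ 2 := by rw [← sq_abs x]; ring
  nlinarith [sq_nonneg x]

theorem cos_pi_div_two_mul_le_one_sub_inv_sq {x : ℝ} (hx : 2 ≤ x) :
    cos (π / (2 * x)) ≤ 1 - 1 / x ^ 2 := by
  have hx0 : 0 < x := by linarith
  have hy : |π / (2 * x)| ≤ 1 := by
    rw [abs_of_nonneg (by positivity), div_le_one (by positivity)]
    linarith [pi_le_four]
  have hy_sq : (π / (2 * x)) ^ 2 = π ^ 2 / 4 * (1 / x ^ 2) := by field_simp; ring
  have hpi_sq : 9 < π ^ 2 := by nlinarith [pi_gt_three]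
  have hcos := cos_le_one_sub_mul_sq hy
  nlinarith [one_div_pos.2 (pow_pos hx0 2)]

theorem four_mul_sq_le_two_pow {n : ℕ} (hn : 8 ≤ n) : 4 * n ^ 2 ≤ 2 ^ n := by
  induction n, hn using Nat.le_induction with
  | base => norm_num
  | succ n hn ih =>
    calc 4 * (n + 1) ^ 2 ≤ 2 * (4 * n ^ 2) := by nlinarith
      _ ≤ 2 ^ (n + 1) := by rw [pow_succ 2 n]; linarith

theorem five_mul_two_pow_lt_sixteen_mul_sq {n : ℕ} (h1 : 1 ≤ n) (h7 : n ≤ 7) :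
    5 * 2 ^ n < 16 * n ^ 2 := by
  interval_cases n <;> norm_num

theorem cos_pi_div_two_mul_le_one_sub_four_div_two_pow {n : ℕ} (hn : 8 ≤ n) :
    cos (π / (2 * n)) ≤ 1 - 4 / 2 ^ n := by
  have hsq : (4 : ℝ) * n ^ 2 ≤ 2 ^ n := by exact_mod_cast four_mul_sq_le_two_pow hn
  have hn0 : (0 : ℝ) < n := by positivity
  calc cos (π / (2 * n)) ≤ 1 - 1 / (n : ℝ) ^ 2 :=
        cos_pi_div_two_mul_le_one_sub_inv_sq (by exact_mod_cast (by omega : 2 ≤ n))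
    _ ≤ 1 - 4 / 2 ^ n := by
        refine sub_le_sub_left ?_ 1
        rw [div_le_div_iff₀ (by positivity) (by positivity)]
        linarith

theorem one_sub_four_div_two_pow_lt_cos_pi_div_two_mul {n : ℕ} (h1 : 1 ≤ n) (h7 : n ≤ 7) :
    1 - 4 / 2 ^ n < cos (π / (2 * n)) := by
  have hpow : (5 : ℝ) * 2 ^ n < 16 * n ^ 2 := by
    exact_mod_cast five_mul_two_pow_lt_sixteen_mul_sq h1 h7
  have hpi_sq : π ^ 2 < 10 := by nlinarith [pi_lt_d2, pi_pos]
  have hn0 : (0 : ℝ) < n := by positivity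
  calc 1 - 4 / 2 ^ n < 1 - (π / (2 * n)) ^ 2 / 2 := by
        refine sub_lt_sub_left ?_ 1
        rw [div_pow, mul_pow, div_div, div_lt_div_iff₀ (by positivity) (by positivity)]
        nlinarith [pow_pos (two_pos : (0 : ℝ) < 2) n]
    _ ≤ cos (π / (2 * n)) := one_sub_sq_div_two_le_cos

/-- For positive integers `n`, the inequality `cos(π/(2n)) > 1 − 2^(2−n)`
holds iff `n ≤ 7`; in particular, for all `n ≥ 8`,
`cos(π/(2n)) ≤ 1 − 4/2ⁿ`. -/
theorem cos_threshold_nand_bound :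
    (∀ n : ℕ, 1 ≤ n →
      (Real.cos (Real.pi / (2 * n)) > 1 - (2 : ℝ) ^ ((2 : ℤ) - (n : ℤ)) ↔ n ≤ 7)) ∧
    (∀ n : ℕ, 8 ≤ n →
      Real.cos (Real.pi / (2 * n)) ≤ 1 - 4 / 2 ^ n) := by
  refine ⟨fun n hn => ?_, fun n hn => cos_pi_div_two_mul_le_one_sub_four_div_two_pow hn⟩
  have hzpow : (2 : ℝ) ^ ((2 : ℤ) - (n : ℤ)) = 4 / 2 ^ n := by
    rw [zpow_sub₀ two_ne_zero, zpow_natCast]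
    norm_num
  rw [hzpow, gt_iff_lt]
  refine ⟨fun hlt => ?_, one_sub_four_div_two_pow_lt_cos_pi_div_two_mul hn⟩
  by_contra! h8
  exact (cos_pi_div_two_mul_le_one_sub_four_div_two_pow h8).not_gt hlt
end

section
/- Let p : {0,1}² × {0,1}² → [0,1] be a conditional probability distribution p(m₁,m₂ | s₁,s₂) (normalized for each (s₁,s₂)) that is non-signalling (each party's marginal distribution is independent of the other party's input) and satisfies p(m₁ ⊕ m₂ = s₁·s₂ | s₁,s₂) = 1 for all inputs. Then p(m₁,m₂|s₁,s₂) = 1/2 for every (m₁,m₂) with m₁ ⊕ m₂ = s₁·s₂ and 0 otherwise; i.e., p is the Popescu–Rohrlich box, and in particular all single-party marginals are uniform. -/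
/-- The Popescu–Rohrlich box is the unique non-signalling conditional
distribution `p(m₁,m₂|s₁,s₂)` on bits that wins the CHSH game with certainty:
if `p` is normalized, non-signalling, and satisfies
`p(m₁ ⊕ m₂ = s₁·s₂ | s₁,s₂) = 1` for all inputs, then
`p(m₁,m₂|s₁,s₂) = 1/2` whenever `m₁ ⊕ m₂ = s₁·s₂` and `0` otherwise. -/
theorem pr_box_unique
    (p : ZMod 2 → ZMod 2 → ZMod 2 → ZMod 2 → ℝ)
    (hpos : ∀ m₁ m₂ s₁ s₂, 0 ≤ p m₁ m₂ s₁ s₂)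
    (hnorm : ∀ s₁ s₂, ∑ m₁, ∑ m₂, p m₁ m₂ s₁ s₂ = 1)
    (hns₁ : ∀ m₁ s₁ s₂ s₂', ∑ m₂, p m₁ m₂ s₁ s₂ = ∑ m₂, p m₁ m₂ s₁ s₂')
    (hns₂ : ∀ m₂ s₁ s₁' s₂, ∑ m₁, p m₁ m₂ s₁ s₂ = ∑ m₁, p m₁ m₂ s₁' s₂)
    (hwin : ∀ s₁ s₂, ∑ m₁, p m₁ (s₁ * s₂ + m₁) s₁ s₂ = 1) :
    ∀ m₁ m₂ s₁ s₂,
      p m₁ m₂ s₁ s₂ = if m₁ + m₂ = s₁ * s₂ then 1 / 2 else 0 := by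
  have hsum : ∀ f : ZMod 2 → ℝ, ∑ i, f i = f 0 + f 1 := fun f => Fin.sum_univ_two f
  have hn00 : p 0 0 0 0 + p 0 1 0 0 + (p 1 0 0 0 + p 1 1 0 0) = 1 := by
    have := hnorm 0 0; rw [hsum] at this; rw [hsum, hsum] at this; exact this
  have hw00 : p 0 0 0 0 + p 1 1 0 0 = 1 := by
    have := hwin 0 0; rw [hsum] at this; exact this
  have hn01 : p 0 0 0 1 + p 0 1 0 1 + (p 1 0 0 1 + p 1 1 0 1) = 1 := by
    have := hnorm 0 1; rw [hsum] at this; rw [hsum, hsum] at this; exact this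
  have hw01 : p 0 0 0 1 + p 1 1 0 1 = 1 := by
    have := hwin 0 1; rw [hsum] at this; exact this
  have hn10 : p 0 0 1 0 + p 0 1 1 0 + (p 1 0 1 0 + p 1 1 1 0) = 1 := by
    have := hnorm 1 0; rw [hsum] at this; rw [hsum, hsum] at this; exact this
  have hw10 : p 0 0 1 0 + p 1 1 1 0 = 1 := by
    have := hwin 1 0; rw [hsum] at this; exact this
  have hn11 : p 0 0 1 1 + p 0 1 1 1 + (p 1 0 1 1 + p 1 1 1 1) = 1 := by
    have := hnorm 1 1; rw [hsum] at this; rw [hsum, hsum] at this; exact this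
  have hw11 : p 0 1 1 1 + p 1 0 1 1 = 1 := by
    have := hwin 1 1; rw [hsum] at this; exact this
  have ha00 : p 0 0 0 0 + p 0 1 0 0 = p 0 0 0 1 + p 0 1 0 1 := by
    have := hns₁ 0 0 0 1; rw [hsum, hsum] at this; exact this
  have hb00 : p 0 0 0 0 + p 1 0 0 0 = p 0 0 1 0 + p 1 0 1 0 := by
    have := hns₂ 0 0 1 0; rw [hsum, hsum] at this; exact this
  have ha01 : p 0 0 1 0 + p 0 1 1 0 = p 0 0 1 1 + p 0 1 1 1 := by
    have := hns₁ 0 1 0 1; rw [hsum, hsum] at this; exact this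
  have hb01 : p 0 0 0 1 + p 1 0 0 1 = p 0 0 1 1 + p 1 0 1 1 := by
    have := hns₂ 0 0 1 1; rw [hsum, hsum] at this; exact this
  have ha10 : p 1 0 0 0 + p 1 1 0 0 = p 1 0 0 1 + p 1 1 0 1 := by
    have := hns₁ 1 0 0 1; rw [hsum, hsum] at this; exact this
  have hb10 : p 0 1 0 0 + p 1 1 0 0 = p 0 1 1 0 + p 1 1 1 0 := by
    have := hns₂ 1 0 1 0; rw [hsum, hsum] at this; exact this
  have ha11 : p 1 0 1 0 + p 1 1 1 0 = p 1 0 1 1 + p 1 1 1 1 := by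
    have := hns₁ 1 1 0 1; rw [hsum, hsum] at this; exact this
  have hb11 : p 0 1 0 1 + p 1 1 0 1 = p 0 1 1 1 + p 1 1 1 1 := by
    have := hns₂ 1 0 1 1; rw [hsum, hsum] at this; exact this
  have htwo : ∀ x : ZMod 2, x = 0 ∨ x = 1 := by decide
  intro m₁ m₂ s₁ s₂
  rcases htwo m₁ with rfl | rfl <;> rcases htwo m₂ with rfl | rfl <;>
    rcases htwo s₁ with rfl | rfl <;> rcases htwo s₂ with rfl | rfl <;>
    split_ifs with h <;>
    first
      | exact absurd h (by decide)
      | exact absurd (by decide) h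
      | linarith [hn00, hw00, hn01, hw01, hn10, hw10, hn11, hw11, ha00, hb00, ha01, hb01, ha10, hb10, ha11, hb11, hpos 0 0 0 0, hpos 0 0 0 1, hpos 0 0 1 0, hpos 0 0 1 1, hpos 0 1 0 0, hpos 0 1 0 1, hpos 0 1 1 0, hpos 0 1 1 1, hpos 1 0 0 0, hpos 1 0 0 1, hpos 1 0 1 0, hpos 1 0 1 1, hpos 1 1 0 0, hpos 1 1 0 1, hpos 1 1 1 0, hpos 1 1 1 1]
end
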